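/- For every even integer d ≥ 2, the Vapnik–Chervonenkis dimension of the family 𝓓_d of all closed degenerate balls in ℓ∞^d satisfies 3d/2 ≤ VC-dim(𝓓_d) ≤ 3d/2 + 1. -/

import Mathlib

open Set Metric

/-- A family `E` of subsets of `X` shatters a set `σ` if every subset of `σ`
is carved out by some member of `E`. -/
def Shatters {X : Type*} (E : Set (Set X)) (σ : Set X) : Prop :=
  ∀ T ⊆ σ, ∃ C ∈ E, C ∩ σ = T

/-- Vapnik–Chervonenkis dimension: supremum of cardinalities of finite shattered sets. -/
noncomputable def vcDim {X : Type*} (E : Set (Set X)) : ℕ∞ :=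
  ⨆ (σ : Finset X) (_ : Shatters E ↑σ), (σ.card : ℕ∞)

/-- The family of all closed balls in `ℓ∞^d` (sup-norm balls = axis-parallel cubes,
including singletons as balls of radius 0). -/
def Cd (d : ℕ) : Set (Set (Fin d → ℝ)) :=
  {C | ∃ x : Fin d → ℝ, ∃ r : ℝ, 0 ≤ r ∧ C = Metric.closedBall x r}

/-- A closed degenerate ball in `ℓ∞^d`: a product of closed intervals, each of which is
unbounded on at least one side, i.e. of the form `(-∞, b]`, `[a, ∞)` or all of `ℝ`. -/
def IsDegBall {d : ℕ} (C : Set (Fin d → ℝ)) : Prop :=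
  ∃ I : Fin d → Set ℝ,
    (∀ i, (∃ b, I i = Set.Iic b) ∨ (∃ a, I i = Set.Ici a) ∨ I i = Set.univ) ∧
    C = {x | ∀ i, x i ∈ I i}

/-- The family of all closed degenerate balls in `ℓ∞^d`. -/
def Dd (d : ℕ) : Set (Set (Fin d → ℝ)) := {C | IsDegBall C}

/-- The family of closed degenerate balls in `ℓ∞^d` containing the set `F`. -/
def DdF (d : ℕ) (F : Set (Fin d → ℝ)) : Set (Set (Fin d → ℝ)) :=
  {C | IsDegBall C ∧ F ⊆ C}

/-- The family of closed degenerate balls in `ℓ∞^d` containing the origin. -/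
def Dd0 (d : ℕ) : Set (Set (Fin d → ℝ)) := DdF d {0}

/-!
A slot `(i, ±)` is the signed coordinate `±xᵢ`. If degenerate balls shatter `σ`, a ball cutting
out `σ \ {p}` leaves `p` beyond one of its faces, so every point of `σ` is the strict maximum of
some slot, and distinct points own distinct slots. Call a coordinate a conflict if its two slots
are owned by points `p`, `q` owning nothing else; a ball cutting out `σ \ {p, q}` then produces a
slot at which `p` and `q` tie above all other points. Such a slot is owned by nobody, and distinct
conflicts give distinct tie slots. With `a` single-slot points and `k` conflicts this gives
`2|σ| - a + k ≤ 2d` and `a ≤ d + k`, hence `2|σ| ≤ 3d`.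

Conversely, the points `(1, -1)`, `(-1, 1)`, `(2, 2)` of the plane are shattered by degenerate
balls containing the origin, and products of such balls shatter `d/2` copies of this triple
placed in complementary coordinate planes.
-/

def IsClosedRay (s : Set ℝ) : Prop :=
  (∃ b, s = Iic b) ∨ (∃ a, s = Ici a) ∨ s = univ

def degBalls (ι : Type*) : Set (Set (ι → ℝ)) :=
  {C | ∃ I : ι → Set ℝ, (∀ i, IsClosedRay (I i)) ∧ C = {x | ∀ i, x i ∈ I i}}

theorem Dd_eq_degBalls (d : ℕ) : Dd d = degBalls (Fin d) := rfl

section Shatters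

variable {X Y : Type*} {E : Set (Set X)} {σ : Set X}

theorem Shatters.mono {E' : Set (Set X)} (h : Shatters E σ) (hE : E ⊆ E') : Shatters E' σ :=
  fun T hT =>
  let ⟨C, hC, hCT⟩ := h T hT
  ⟨C, hE hC, hCT⟩

theorem Shatters.image_equiv {F : Set (Set Y)} (h : Shatters E σ) (f : X ≃ Y)
    (hf : ∀ C ∈ E, f '' C ∈ F) : Shatters F (f '' σ) := by
  intro T hT
  obtain ⟨C, hC, hCT⟩ :=
    h (f ⁻¹' T) ((preimage_mono hT).trans_eq (preimage_image_eq σ f.injective))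
  refine ⟨f '' C, hf C hC, ?_⟩
  rw [← image_inter f.injective, hCT, image_preimage_eq T f.surjective]

theorem Shatters.card_le_vcDim {σ : Finset X} (h : Shatters E σ) : (σ.card : ℕ∞) ≤ vcDim E :=
  le_iSup₂_of_le σ h le_rfl

end Shatters

theorem IsClosedRay.exists_side {J : Set ℝ} (hJ : IsClosedRay J) :
    ∃ b : Bool, ∀ y ∉ J, ∀ x ∈ J, if b then x < y else y < x := by
  rcases hJ with ⟨c, rfl⟩ | ⟨c, rfl⟩ | rfl
  · exact ⟨true, fun y hy x hx => by simp_all; linarith⟩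
  · exact ⟨false, fun y hy x hx => by simp_all; linarith⟩
  · exact ⟨true, fun y hy => absurd (mem_univ y) hy⟩

section Slots

open scoped Classical

variable {ι : Type*}

def slotVal (s : ι × Bool) (x : ι → ℝ) : ℝ :=
  if s.2 then x s.1 else -x s.1

theorem slotVal_not (i : ι) (b : Bool) (x : ι → ℝ) :
    slotVal (i, !b) x = -slotVal (i, b) x := by
  cases b <;> simp [slotVal]

theorem exists_dir_of_mem_degBalls {C : Set (ι → ℝ)} (hC : C ∈ degBalls ι) :
    ∃ dir : ι → Bool, ∀ p ∉ C, ∃ i, ∀ x ∈ C, slotVal (i, dir i) x < slotVal (i, dir i) p := by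
  obtain ⟨I, hI, rfl⟩ := hC
  choose dir hdir using fun i => (hI i).exists_side
  refine ⟨dir, fun p hp => ?_⟩
  obtain ⟨i, hpi⟩ := not_forall.mp hp
  refine ⟨i, fun x hx => ?_⟩
  have := hdir i (p i) hpi (x i) (hx i)
  cases h : dir i <;> simp_all [slotVal]

theorem Shatters.exists_dir {σ : Finset (ι → ℝ)} (h : Shatters (degBalls ι) σ)
    {U : Finset (ι → ℝ)} (hU : U ⊆ σ) :
    ∃ dir : ι → Bool, ∀ p ∈ U, ∃ i, ∀ q ∈ σ, q ∉ U →
      slotVal (i, dir i) q < slotVal (i, dir i) p := by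
  obtain ⟨C, hC, hCσ⟩ := h (↑σ \ ↑U) sdiff_subset
  obtain ⟨dir, hdir⟩ := exists_dir_of_mem_degBalls hC
  refine ⟨dir, fun p hp => ?_⟩
  have hpC : p ∉ C := fun hpC => (hCσ ▸ ⟨hpC, hU hp⟩ : p ∈ (↑σ \ ↑U : Set _)).2 hp
  obtain ⟨i, hi⟩ := hdir p hpC
  exact ⟨i, fun q hq hqU => hi q (hCσ.symm ▸ ⟨hq, hqU⟩ : q ∈ C ∩ ↑σ).1⟩

def IsStrictTop (σ : Finset (ι → ℝ)) (s : ι × Bool) (p : ι → ℝ) : Prop :=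
  p ∈ σ ∧ ∀ q ∈ σ, q ≠ p → slotVal s q < slotVal s p

def IsTie (σ : Finset (ι → ℝ)) (s : ι × Bool) (p q : ι → ℝ) : Prop :=
  p ∈ σ ∧ q ∈ σ ∧ p ≠ q ∧ slotVal s p = slotVal s q ∧
    ∀ r ∈ σ, r ≠ p → r ≠ q → slotVal s r < slotVal s p

variable {σ : Finset (ι → ℝ)} {s : ι × Bool} {p q : ι → ℝ}

theorem IsStrictTop.unique {p' : ι → ℝ} (h : IsStrictTop σ s p) (h' : IsStrictTop σ s p') :
    p = p' := by
  by_contra hne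
  linarith [h.2 p' h'.1 (Ne.symm hne), h'.2 p h.1 hne]

theorem IsTie.symm (h : IsTie σ s p q) : IsTie σ s q p := by
  obtain ⟨hp, hq, hpq, heq, hlt⟩ := h
  exact ⟨hq, hp, hpq.symm, heq.symm, fun r hr hrq hrp => heq ▸ hlt r hr hrp hrq⟩

theorem IsTie.not_isStrictTop (h : IsTie σ s p q) (z : ι → ℝ) : ¬IsStrictTop σ s z := by
  obtain ⟨hp, hq, hpq, heq, hlt⟩ := h
  intro hz
  by_cases hzp : z = p
  · subst hzp; linarith [hz.2 q hq hpq.symm]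
  by_cases hzq : z = q
  · subst hzq; linarith [hz.2 p hp hpq]
  linarith [hlt z hz.1 hzp hzq, hz.2 p hp (Ne.symm hzp)]

theorem IsTie.overlap {p' q' : ι → ℝ} (h : IsTie σ s p q) (h' : IsTie σ s p' q') :
    p' = p ∨ p' = q ∨ q' = p ∨ q' = q := by
  by_contra! hc
  linarith [h.2.2.2.2 p' h'.1 hc.1 hc.2.1, h'.2.2.2.2 p h.1 (Ne.symm hc.1) (Ne.symm hc.2.2.1)]

theorem isTie_or_isStrictTop (hp : p ∈ σ) (hq : q ∈ σ) (hpq : p ≠ q)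
    (h : ∀ r ∈ σ, r ≠ p → r ≠ q → slotVal s r < slotVal s p) :
    IsTie σ s p q ∨ IsStrictTop σ s p ∨ IsStrictTop σ s q := by
  rcases lt_trichotomy (slotVal s q) (slotVal s p) with hlt | heq | hgt
  · refine Or.inr (Or.inl ⟨hp, fun r hr hrp => ?_⟩)
    by_cases hrq : r = q
    · exact hrq ▸ hlt
    · exact h r hr hrp hrq
  · exact Or.inl ⟨hp, hq, hpq, heq.symm, h⟩
  · refine Or.inr (Or.inr ⟨hq, fun r hr hrq => ?_⟩)
    by_cases hrp : r = p
    · exact hrp ▸ hgt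
    · exact (h r hr hrp hrq).trans hgt

variable [Fintype ι]

noncomputable def topSlots (σ : Finset (ι → ℝ)) (p : ι → ℝ) : Finset (ι × Bool) :=
  Finset.univ.filter fun s => IsStrictTop σ s p

theorem mem_topSlots : s ∈ topSlots σ p ↔ IsStrictTop σ s p := by
  simp [topSlots]

theorem disjoint_topSlots (hpq : p ≠ q) : Disjoint (topSlots σ p) (topSlots σ q) :=
  Finset.disjoint_left.2 fun _ hp hq => hpq ((mem_topSlots.1 hp).unique (mem_topSlots.1 hq))

theorem mem_of_topSlots_eq_singleton (hp : topSlots σ p = {s}) : p ∈ σ :=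
  (mem_topSlots.1 (hp ▸ Finset.mem_singleton_self s)).1

theorem Shatters.topSlots_nonempty (h : Shatters (degBalls ι) σ) (hp : p ∈ σ) :
    (topSlots σ p).Nonempty := by
  obtain ⟨dir, hdir⟩ := h.exists_dir (Finset.singleton_subset_iff.2 hp)
  obtain ⟨i, hi⟩ := hdir p (Finset.mem_singleton_self p)
  exact ⟨(i, dir i), mem_topSlots.2 ⟨hp, fun q hq hqp => hi q hq (by simpa using hqp)⟩⟩

theorem isTie_or_eq_of_topSlots {i : ι} {b : Bool} {t : ι × Bool} {r : ι → ℝ}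
    (hp : topSlots σ p = {(i, b)}) (hq : topSlots σ q = {(i, !b)})
    (hr : r ∈ σ) (hrp : r ≠ p) (hrq : r ≠ q)
    (hbeat : ∀ r ∈ σ, r ≠ p → r ≠ q → slotVal t r < slotVal t p) :
    IsTie σ t p q ∨ t = (i, b) := by
  have hpq : p ≠ q := by
    rintro rfl
    simpa using hp.symm.trans hq
  rcases isTie_or_isStrictTop (mem_of_topSlots_eq_singleton hp)
    (mem_of_topSlots_eq_singleton hq) hpq hbeat with htie | htop | htop
  · exact Or.inl htie
  · exact Or.inr (by simpa [hp] using mem_topSlots.2 htop)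
  · have ht : t = (i, !b) := by simpa [hq] using mem_topSlots.2 htop
    have hrp' := (mem_topSlots.1 (hp ▸ Finset.mem_singleton_self _)).2 r hr hrp
    have := hbeat r hr hrp hrq
    rw [ht, slotVal_not, slotVal_not] at this
    linarith

theorem Shatters.exists_isTie (h : Shatters (degBalls ι) σ) {i : ι} {r : ι → ℝ}
    (hp : topSlots σ p = {(i, true)}) (hq : topSlots σ q = {(i, false)})
    (hr : r ∈ σ) (hrp : r ≠ p) (hrq : r ≠ q) : ∃ t, IsTie σ t p q := by
  have hpσ := mem_of_topSlots_eq_singleton hp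
  have hqσ := mem_of_topSlots_eq_singleton hq
  obtain ⟨dir, hdir⟩ := h.exists_dir (U := {p, q}) (by simp [Finset.insert_subset_iff, hpσ, hqσ])
  obtain ⟨ip, hip⟩ := hdir p (by simp)
  obtain ⟨iq, hiq⟩ := hdir q (by simp)
  rcases isTie_or_eq_of_topSlots hp hq hr hrp hrq
    (fun r hr hrp hrq => hip r hr (by simp [hrp, hrq])) with htie | hpt
  · exact ⟨_, htie⟩
  rcases isTie_or_eq_of_topSlots (b := false) hq hp hr hrq hrp
    (fun r hr hrq hrp => hiq r hr (by simp [hrp, hrq])) with htie | hqt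
  · exact ⟨_, htie.symm⟩
  -- a ball bounds coordinate `i` from one side only, so `p` and `q` cannot both lie beyond it there
  simp only [Prod.mk.injEq] at hpt hqt
  obtain ⟨rfl, hdir_true⟩ := hpt
  obtain ⟨rfl, hdir_false⟩ := hqt
  simp [hdir_true] at hdir_false

noncomputable def ownedSlots (σ : Finset (ι → ℝ)) : Finset (ι × Bool) :=
  σ.biUnion (topSlots σ)

noncomputable def singleSlots (σ : Finset (ι → ℝ)) : Finset (ι × Bool) :=
  (σ.filter fun p => (topSlots σ p).card = 1).biUnion (topSlots σ)

theorem mem_singleSlots : s ∈ singleSlots σ ↔ ∃ p ∈ σ, topSlots σ p = {s} := by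
  simp only [singleSlots, Finset.mem_biUnion, Finset.mem_filter, Finset.card_eq_one]
  constructor
  · rintro ⟨p, ⟨hp, s', hs'⟩, hs⟩
    rw [hs', Finset.mem_singleton] at hs
    exact ⟨p, hp, hs ▸ hs'⟩
  · rintro ⟨p, hp, hs⟩
    exact ⟨p, ⟨hp, s, hs⟩, hs ▸ Finset.mem_singleton_self s⟩

theorem Shatters.two_mul_card_le_card_singleSlots_add (h : Shatters (degBalls ι) σ) :
    2 * σ.card ≤ (singleSlots σ).card + (ownedSlots σ).card := by
  have hdisj : (σ : Set (ι → ℝ)).PairwiseDisjoint (topSlots σ) :=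
    fun p _ q _ hpq => disjoint_topSlots hpq
  calc 2 * σ.card = ∑ p ∈ σ, 2 := by simp [mul_comm]
    _ ≤ ∑ p ∈ σ, ((if (topSlots σ p).card = 1 then (topSlots σ p).card else 0) +
          (topSlots σ p).card) := Finset.sum_le_sum fun p hp => by
        have := (h.topSlots_nonempty hp).card_pos
        split_ifs <;> omega
    _ = (singleSlots σ).card + (ownedSlots σ).card := by
        rw [Finset.sum_add_distrib, ← Finset.sum_filter, singleSlots, ownedSlots,
          Finset.card_biUnion (hdisj.subset (Finset.coe_subset.2 (Finset.filter_subset _ σ))),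
          Finset.card_biUnion hdisj]

theorem card_le_card_add_card_filter_both (S : Finset (ι × Bool)) :
    S.card ≤
      Fintype.card ι + (Finset.univ.filter fun i => (i, true) ∈ S ∧ (i, false) ∈ S).card := by
  set T := Finset.univ.filter fun i => (i, true) ∈ S
  set F := Finset.univ.filter fun i => (i, false) ∈ S
  calc S.card ≤ (T ×ˢ {true} ∪ F ×ˢ {false}).card := Finset.card_le_card <| by
        rintro ⟨i, (_ | _)⟩ h <;> simp [T, F, h]
    _ ≤ T.card + F.card := by simpa using Finset.card_union_le (T ×ˢ {true}) (F ×ˢ {false})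
    _ = (T ∪ F).card + (T ∩ F).card := (Finset.card_union_add_card_inter T F).symm
    _ ≤ Fintype.card ι + (T ∩ F).card := by grw [Finset.card_le_univ (T ∪ F)]
    _ = _ := by rw [← Finset.filter_and]

theorem Shatters.card_ownedSlots_add_le (h : Shatters (degBalls ι) σ) (h3 : 3 ≤ σ.card) :
    (ownedSlots σ).card +
      (Finset.univ.filter fun i => (i, true) ∈ singleSlots σ ∧ (i, false) ∈ singleSlots σ).card ≤
      2 * Fintype.card ι := by
  set K := Finset.univ.filter fun i => (i, true) ∈ singleSlots σ ∧ (i, false) ∈ singleSlots σ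
  have htie : ∀ i ∈ K, ∃ t p q, topSlots σ p = {(i, true)} ∧ topSlots σ q = {(i, false)} ∧
      IsTie σ t p q := by
    intro i hi
    obtain ⟨hT, hF⟩ := (Finset.mem_filter.1 hi).2
    obtain ⟨p, -, hp⟩ := mem_singleSlots.1 hT
    obtain ⟨q, -, hq⟩ := mem_singleSlots.1 hF
    obtain ⟨r, hr, hrpq⟩ := Finset.exists_mem_notMem_of_card_lt_card
      ((Finset.card_le_two (a := p) (b := q)).trans_lt h3)
    obtain ⟨t, ht⟩ := h.exists_isTie hp hq hr (by simp_all) (by simp_all)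
    exact ⟨t, p, q, hp, hq, ht⟩
  choose! tie p q hp hq htie using htie
  have hinj : Set.InjOn tie K := by
    intro i hi j hj hij
    have hcoord : ∀ {x : ι → ℝ} {b b' : Bool}, topSlots σ x = {(i, b)} →
        topSlots σ x = {(j, b')} → i = j := fun h h' =>
      (Prod.ext_iff.1 (Finset.singleton_injective (h.symm.trans h'))).1
    rcases (htie i hi).overlap (hij ▸ htie j hj) with h | h | h | h
    · exact hcoord (hp i hi) (h ▸ hp j hj)
    · exact hcoord (hq i hi) (h ▸ hp j hj)
    · exact hcoord (hp i hi) (h ▸ hq j hj)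
    · exact hcoord (hq i hi) (h ▸ hq j hj)
  have hdisj : Disjoint (ownedSlots σ) (K.image tie) := by
    refine Finset.disjoint_right.2 fun s hs hown => ?_
    obtain ⟨i, hi, rfl⟩ := Finset.mem_image.1 hs
    obtain ⟨z, -, hz⟩ := Finset.mem_biUnion.1 hown
    exact (htie i hi).not_isStrictTop z (mem_topSlots.1 hz)
  calc (ownedSlots σ).card + K.card = (ownedSlots σ ∪ K.image tie).card := by
        rw [Finset.card_union_of_disjoint hdisj, Finset.card_image_of_injOn hinj]
    _ ≤ Fintype.card (ι × Bool) := Finset.card_le_univ _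
    _ = 2 * Fintype.card ι := by simp [mul_comm]

theorem Shatters.two_mul_card_le (hι : 2 ≤ Fintype.card ι) (h : Shatters (degBalls ι) σ) :
    2 * σ.card ≤ 3 * Fintype.card ι := by
  by_cases h3 : σ.card ≤ 2
  · omega
  have := h.two_mul_card_le_card_singleSlots_add
  have := card_le_card_add_card_filter_both (singleSlots σ)
  have := h.card_ownedSlots_add_le (by omega)
  omega

end Slots

def degBalls₀ (ι : Type*) : Set (Set (ι → ℝ)) :=
  {C | C ∈ degBalls ι ∧ (0 : ι → ℝ) ∈ C}

section Blocks

variable {ι κ : Type*}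

theorem Shatters.zero_notMem {S : Set (ι → ℝ)} (h : Shatters (degBalls₀ ι) S) :
    (0 : ι → ℝ) ∉ S := fun h0 => by
  obtain ⟨C, ⟨-, hC0⟩, hC⟩ := h ∅ (empty_subset S)
  exact hC.subset ⟨hC0, h0⟩

theorem vcDim_degBalls_le_of_equiv (e : ι ≃ κ) : vcDim (degBalls ι) ≤ vcDim (degBalls κ) := by
  let f : (ι → ℝ) ≃ (κ → ℝ) := e.arrowCongr (Equiv.refl ℝ)
  have hf : ∀ C ∈ degBalls ι, f '' C ∈ degBalls κ := by
    rintro _ ⟨I, hI, rfl⟩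
    refine ⟨I ∘ e.symm, fun k => hI _, ?_⟩
    ext y
    simpa [f, f.image_eq_preimage_symm] using
      ⟨fun h k => by simpa using h (e.symm k), fun h i => by simpa using h (e i)⟩
  refine iSup₂_le fun σ h => ?_
  have hmap : Shatters (degBalls κ) ↑(σ.map f.toEmbedding) := by
    rw [Finset.coe_map]
    exact h.image_equiv f hf
  simpa using hmap.card_le_vcDim

theorem injOn_uncurry_single [DecidableEq κ] {S : Set (ι → ℝ)} (hS : (0 : ι → ℝ) ∉ S) :
    InjOn (fun kw : κ × (ι → ℝ) => Function.uncurry (Pi.single kw.1 kw.2)) (univ ×ˢ S) := by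
  rintro ⟨k, w⟩ ⟨-, hw⟩ ⟨k', w'⟩ - heq
  have heq : Pi.single k w = Pi.single k' w' := Function.uncurry_injective heq
  obtain rfl | hk := eq_or_ne k k'
  · rw [Pi.single_injective k heq]
  · exact absurd (by simpa [hk] using congrFun heq k) (ne_of_mem_of_not_mem hw hS)

theorem Shatters.uncurry_single [DecidableEq κ] {S : Set (ι → ℝ)} (h : Shatters (degBalls₀ ι) S) :
    Shatters (degBalls₀ (κ × ι))
      ((fun kw : κ × (ι → ℝ) => Function.uncurry (Pi.single kw.1 kw.2)) '' (univ ×ˢ S)) := by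
  intro T hT
  have hblock : ∀ k, ∃ I : ι → Set ℝ, (∀ c, IsClosedRay (I c) ∧ (0 : ℝ) ∈ I c) ∧
      ∀ w ∈ S, (∀ c, w c ∈ I c) ↔ Function.uncurry (Pi.single k w) ∈ T := by
    intro k
    obtain ⟨C, ⟨⟨I, hI, rfl⟩, h0⟩, hC⟩ :=
      h {w ∈ S | Function.uncurry (Pi.single k w) ∈ T} (sep_subset _ _)
    refine ⟨I, fun c => ⟨hI c, h0 c⟩, fun w hw => ?_⟩
    simpa [hw] using congrArg (w ∈ ·) hC
  choose I hI hIT using hblock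
  refine ⟨{x | ∀ kc : κ × ι, x kc ∈ I kc.1 kc.2},
    ⟨⟨fun kc => I kc.1 kc.2, fun kc => (hI _ _).1, rfl⟩, fun kc => (hI _ _).2⟩, ?_⟩
  ext x
  constructor
  · rintro ⟨hxC, ⟨k, w⟩, ⟨-, hw⟩, rfl⟩
    exact (hIT k w hw).1 fun c => by simpa using hxC (k, c)
  · intro hx
    refine ⟨?_, hT hx⟩
    obtain ⟨⟨k, w⟩, ⟨-, hw⟩, rfl⟩ := hT hx
    rintro ⟨k', c⟩
    obtain rfl | hk := eq_or_ne k' k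
    · simpa using (hIT k' w hw).2 hx c
    · simpa [hk] using (hI k' c).2

theorem Shatters.card_mul_card_le_vcDim [Fintype κ] {S : Finset (ι → ℝ)}
    (h : Shatters (degBalls₀ ι) S) :
    ((Fintype.card κ * S.card : ℕ) : ℕ∞) ≤ vcDim (degBalls (κ × ι)) := by
  classical
  let σ := (Finset.univ ×ˢ S).image fun kw : κ × (ι → ℝ) => Function.uncurry (Pi.single kw.1 kw.2)
  have hσ : Shatters (degBalls (κ × ι)) σ := by
    simp only [σ, Finset.coe_image, Finset.coe_product, Finset.coe_univ]
    exact h.uncurry_single.mono fun C hC => hC.1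
  have hcard : σ.card = Fintype.card κ * S.card := by
    rw [Finset.card_image_of_injOn (by simpa using injOn_uncurry_single h.zero_notMem),
      Finset.card_product, Finset.card_univ]
  exact hcard ▸ hσ.card_le_vcDim

end Blocks

theorem shatters_triple :
    Shatters (degBalls₀ (Fin 2)) ↑({![1, -1], ![-1, 1], ![2, 2]} : Finset (Fin 2 → ℝ)) := by
  classical
  intro T hT
  -- `(2, 2)` is cut off by `x ≤ 1` or `y ≤ 0`, `(1, -1)` by `x ≤ 0` or `y ≥ 0`,
  -- and `(-1, 1)` by `x ≥ 0` or `y ≤ 0`.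
  let X : Set ℝ :=
    if ![2, 2] ∈ T then (if ![-1, 1] ∈ T then univ else Ici 0)
    else if ![1, -1] ∈ T then (if ![-1, 1] ∈ T then Iic 1 else univ) else Iic 0
  let Y : Set ℝ :=
    if ![2, 2] ∈ T then (if ![1, -1] ∈ T then univ else Ici 0)
    else if ![-1, 1] ∈ T then univ else Iic 0
  have hmem : ∀ z ∈ ({![1, -1], ![-1, 1], ![2, 2]} : Finset (Fin 2 → ℝ)),
      (z 0 ∈ X ∧ z 1 ∈ Y) ↔ z ∈ T := by
    intro z hz
    simp only [Finset.mem_insert, Finset.mem_singleton] at hz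
    rcases hz with rfl | rfl | rfl <;> simp only [X, Y] <;> split_ifs <;> norm_num <;> tauto
  refine ⟨{x | ∀ c, x c ∈ ![X, Y] c}, ⟨⟨![X, Y], ?_, rfl⟩, ?_⟩, ?_⟩
  · simp only [Fin.forall_fin_two]
    constructor <;> simp only [X, Y, IsClosedRay] <;> split_ifs <;> simp
  · simp only [Fin.forall_fin_two]
    constructor <;> simp only [X, Y] <;> split_ifs <;> simp
  · ext z
    exact ⟨fun ⟨hz, hzσ⟩ => (hmem z hzσ).1 (by simpa [Fin.forall_fin_two] using hz),
      fun hzT => ⟨by simpa [Fin.forall_fin_two] using (hmem z (hT hzT)).2 hzT, hT hzT⟩⟩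

theorem card_triple : ({![1, -1], ![-1, 1], ![2, 2]} : Finset (Fin 2 → ℝ)).card = 3 := by
  rw [Finset.card_insert_of_notMem, Finset.card_pair] <;> norm_num [funext_iff, Fin.forall_fin_two]

/-- For every even `d ≥ 2`, the VC dimension of the family of all closed degenerate balls
in `ℓ∞^d` lies between `3d/2` and `3d/2 + 1`. -/
theorem vcDim_Dd_even (d : ℕ) (hd : 2 ≤ d) (heven : Even d) :
    ((3 * d / 2 : ℕ) : ℕ∞) ≤ vcDim (Dd d) ∧
      vcDim (Dd d) ≤ ((3 * d / 2 + 1 : ℕ) : ℕ∞) := by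
  obtain ⟨m, rfl⟩ := heven
  rw [Dd_eq_degBalls]
  constructor
  · calc ((3 * (m + m) / 2 : ℕ) : ℕ∞) = ((Fintype.card (Fin m) * 3 : ℕ) : ℕ∞) := by
          rw [Fintype.card_fin]; congr 1; omega
      _ ≤ vcDim (degBalls (Fin m × Fin 2)) := card_triple ▸ shatters_triple.card_mul_card_le_vcDim
      _ ≤ vcDim (degBalls (Fin (m + m))) :=
          vcDim_degBalls_le_of_equiv (finProdFinEquiv.trans (finCongr (by omega)))
  · refine iSup₂_le fun σ h => ?_
    have := h.two_mul_card_le (by simpa using hd)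
    rw [Fintype.card_fin] at this
    exact_mod_cast (show σ.card ≤ 3 * (m + m) / 2 + 1 by omega)
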